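/- For all t, u ∈ ℝ the doubly infinite series of complex-valued Cauchy–Laguerre functions converges and ∑_{m=−∞}^{∞} conj(ψ_m(t)) ψ_m(u) = 1/(1 + (t−u)²). -/
import Mathlib

open Real Complex

/-- The complex-valued Cauchy–Laguerre functions `ψ_m`, `m ∈ ℤ`:
`ψ_m(t) = −(1/√2)(it)^m/(it−1)^{m+1}` for `m ≥ 0` and
`ψ_{−m−1}(t) = −(1/√2)(it)^m/(it+1)^{m+1}` for `m ≥ 0`. -/
noncomputable def cauchyLag (m : ℤ) (t : ℝ) : ℂ :=
  if 0 ≤ m then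
    -(1 / (Real.sqrt 2 : ℂ)) * (Complex.I * t) ^ m.toNat / (Complex.I * t - 1) ^ (m.toNat + 1)
  else
    -(1 / (Real.sqrt 2 : ℂ)) * (Complex.I * t) ^ (-m - 1).toNat /
      (Complex.I * t + 1) ^ ((-m - 1).toNat + 1)

lemma sqrt2_sq : ((Real.sqrt 2 : ℝ) : ℂ) * ((Real.sqrt 2 : ℝ) : ℂ) = 2 := by
  rw [← Complex.ofReal_mul, Real.mul_self_sqrt (by norm_num)]
  norm_num

lemma norm_lt_den (t u : ℝ) (d : ℂ) (hd : Complex.normSq d = (1 + t ^ 2) * (1 + u ^ 2)) :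
    ‖(↑t * ↑u : ℂ) / d‖ < 1 := by
  have hd0 : d ≠ 0 := by
    intro h
    rw [h, Complex.normSq_zero] at hd
    nlinarith [sq_nonneg t, sq_nonneg u]
  rw [norm_div, div_lt_one (norm_pos_iff.mpr hd0)]
  have h1 : ‖(↑t * ↑u : ℂ)‖ = |t * u| := by
    rw [← Complex.ofReal_mul, Complex.norm_real, Real.norm_eq_abs]
  have h2 : ‖d‖ ^ 2 = (1 + t ^ 2) * (1 + u ^ 2) := by
    rw [show ‖d‖ ^ 2 = Complex.normSq d from Complex.sq_norm d, hd]
  nlinarith [abs_nonneg (t * u), norm_nonneg d, _root_.sq_abs (t * u), sq_nonneg (t*u),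
    sq_nonneg (t - u), sq_nonneg (t + u)]

/-- The doubly infinite Cauchy–Laguerre expansion of the Cauchy kernel. -/
theorem cauchyLag_expansion (t u : ℝ) :
    Summable (fun m : ℤ => (starRingEnd ℂ) (cauchyLag m t) * cauchyLag m u) ∧
      ∑' m : ℤ, (starRingEnd ℂ) (cauchyLag m t) * cauchyLag m u =
        1 / (1 + ((t : ℂ) - (u : ℂ)) ^ 2) := by
  set f : ℤ → ℂ := fun m => (starRingEnd ℂ) (cauchyLag m t) * cauchyLag m u with hf
  set d₁ : ℂ := (1 + Complex.I * t) * (1 - Complex.I * u) with hd₁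
  set d₂ : ℂ := (1 - Complex.I * t) * (1 + Complex.I * u) with hd₂
  have hsq₁ : Complex.normSq d₁ = (1 + t ^ 2) * (1 + u ^ 2) := by
    rw [hd₁, Complex.normSq_mul]
    simp [Complex.normSq_apply]
    ring
  have hsq₂ : Complex.normSq d₂ = (1 + t ^ 2) * (1 + u ^ 2) := by
    rw [hd₂, Complex.normSq_mul]
    simp [Complex.normSq_apply]
    ring
  have hd₁0 : d₁ ≠ 0 := by
    intro h; rw [h, Complex.normSq_zero] at hsq₁; nlinarith [sq_nonneg t, sq_nonneg u]
  have hd₂0 : d₂ ≠ 0 := by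
    intro h; rw [h, Complex.normSq_zero] at hsq₂; nlinarith [sq_nonneg t, sq_nonneg u]
  have hr₁ : ‖(↑t * ↑u : ℂ) / d₁‖ < 1 := norm_lt_den t u d₁ hsq₁
  have hr₂ : ‖(↑t * ↑u : ℂ) / d₂‖ < 1 := norm_lt_den t u d₂ hsq₂
  clear_value d₁ d₂
  -- pointwise identities
  have hpos : ∀ n : ℕ, f n = (1 / (2 * d₁)) * ((↑t * ↑u : ℂ) / d₁) ^ n := by
    intro n
    have h0 : (0 : ℤ) ≤ (n : ℤ) := Int.natCast_nonneg n
    simp only [hf, cauchyLag, if_pos h0, Int.toNat_natCast]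
    rw [map_div₀, map_pow, map_mul, map_pow, map_mul, map_neg, map_div₀, map_one,
      Complex.conj_ofReal, Complex.conj_I, Complex.conj_ofReal,
      map_sub, map_mul, Complex.conj_I, Complex.conj_ofReal, map_one]
    rw [div_pow, mul_pow, mul_pow]
    have h2 : ((Real.sqrt 2 : ℝ) : ℂ) ≠ 0 := by
      simpa using Real.sqrt_ne_zero'.mpr (by norm_num : (0:ℝ) < 2)
    have hden : (-Complex.I * ↑t - 1) ≠ 0 := by
      intro h
      have := congrArg Complex.re h
      simp [Complex.sub_re, Complex.mul_re] at this
    have hden2 : (Complex.I * ↑u - 1) ≠ 0 := by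
      intro h
      have := congrArg Complex.re h
      simp [Complex.sub_re, Complex.mul_re] at this
    have hA : (-Complex.I) ^ n * Complex.I ^ n = 1 := by
      rw [← mul_pow]; simp
    have hB : (-(Complex.I * ↑t) - 1) ^ (n + 1) * (Complex.I * ↑u - 1) ^ (n + 1)
        = d₁ * d₁ ^ n := by
      rw [← mul_pow, show (-(Complex.I * ↑t) - 1) * (Complex.I * ↑u - 1) = d₁ from by
        rw [hd₁]; ring]
      exact pow_succ' _ _
    have hden' : (-(Complex.I * ↑t) - 1 : ℂ) ≠ 0 := by
      intro h
      have := congrArg Complex.re h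
      simp [Complex.sub_re, Complex.mul_re] at this
    field_simp
    rw [mul_pow]
    linear_combination ((↑t : ℂ) ^ n * (↑u : ℂ) ^ n * 2 * d₁ * d₁ ^ n) * hA
      - ((↑t : ℂ) ^ n * (↑u : ℂ) ^ n
          * ((-(Complex.I * ↑t) - 1) ^ (n + 1) * (Complex.I * ↑u - 1) ^ (n + 1))) * sqrt2_sq
      - (2 * (↑t : ℂ) ^ n * (↑u : ℂ) ^ n) * hB
  have hneg : ∀ n : ℕ, f (-(↑n + 1)) = (1 / (2 * d₂)) * ((↑t * ↑u : ℂ) / d₂) ^ n := by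
    intro n
    have h0 : ¬ (0 : ℤ) ≤ (-(↑n + 1)) := by omega
    have h1 : (-(-(↑n + 1) : ℤ) - 1).toNat = n := by omega
    simp only [hf, cauchyLag, if_neg h0, h1]
    rw [map_div₀, map_pow, map_mul, map_pow, map_mul, map_neg, map_div₀, map_one,
      Complex.conj_ofReal, Complex.conj_I, Complex.conj_ofReal,
      map_add, map_mul, Complex.conj_I, Complex.conj_ofReal, map_one]
    rw [div_pow, mul_pow, mul_pow]
    have hden : (-Complex.I * ↑t + 1) ≠ 0 := by
      intro h
      have := congrArg Complex.re h
      simp [Complex.add_re, Complex.mul_re] at this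
    have hden2 : (Complex.I * ↑u + 1) ≠ 0 := by
      intro h
      have := congrArg Complex.re h
      simp [Complex.add_re, Complex.mul_re] at this
    have hA : (-Complex.I) ^ n * Complex.I ^ n = 1 := by
      rw [← mul_pow]; simp
    have hB : (-(Complex.I * ↑t) + 1) ^ (n + 1) * (Complex.I * ↑u + 1) ^ (n + 1)
        = d₂ * d₂ ^ n := by
      rw [← mul_pow, show (-(Complex.I * ↑t) + 1) * (Complex.I * ↑u + 1) = d₂ from by
        rw [hd₂]; ring]
      exact pow_succ' _ _
    have h2 : ((Real.sqrt 2 : ℝ) : ℂ) ≠ 0 := by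
      simpa using Real.sqrt_ne_zero'.mpr (by norm_num : (0:ℝ) < 2)
    have hden' : (-(Complex.I * ↑t) + 1 : ℂ) ≠ 0 := by
      intro h
      have := congrArg Complex.re h
      simp [Complex.add_re, Complex.mul_re] at this
    field_simp
    rw [mul_pow]
    linear_combination ((↑t : ℂ) ^ n * (↑u : ℂ) ^ n * 2 * d₂ * d₂ ^ n) * hA
      - ((↑t : ℂ) ^ n * (↑u : ℂ) ^ n
          * ((-(Complex.I * ↑t) + 1) ^ (n + 1) * (Complex.I * ↑u + 1) ^ (n + 1))) * sqrt2_sq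
      - (2 * (↑t : ℂ) ^ n * (↑u : ℂ) ^ n) * hB
  -- the two geometric sums
  have hgs₁ : HasSum (fun n : ℕ => f n)
      ((1 / (2 * d₁)) * (1 - (↑t * ↑u : ℂ) / d₁)⁻¹) := by
    have := (hasSum_geometric_of_norm_lt_one hr₁).mul_left (1 / (2 * d₁))
    exact this.congr_fun fun n => hpos n
  have hgs₂ : HasSum (fun n : ℕ => f (-(↑n + 1)))
      ((1 / (2 * d₂)) * (1 - (↑t * ↑u : ℂ) / d₂)⁻¹) := by
    have := (hasSum_geometric_of_norm_lt_one hr₂).mul_left (1 / (2 * d₂))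
    exact this.congr_fun fun n => hneg n
  have htotal : HasSum f ((1 / (2 * d₁)) * (1 - (↑t * ↑u : ℂ) / d₁)⁻¹ +
      (1 / (2 * d₂)) * (1 - (↑t * ↑u : ℂ) / d₂)⁻¹) :=
    HasSum.of_nat_of_neg_add_one hgs₁ hgs₂
  have hval : (1 / (2 * d₁)) * (1 - (↑t * ↑u : ℂ) / d₁)⁻¹ +
      (1 / (2 * d₂)) * (1 - (↑t * ↑u : ℂ) / d₂)⁻¹ =
      1 / (1 + ((t : ℂ) - (u : ℂ)) ^ 2) := by
    have e₁ : d₁ - ↑t * ↑u = 1 + Complex.I * (t - u) := by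
      rw [hd₁]; ring_nf; rw [Complex.I_sq]; push_cast; ring
    have e₂ : d₂ - ↑t * ↑u = 1 - Complex.I * (t - u) := by
      rw [hd₂]; ring_nf; rw [Complex.I_sq]; push_cast; ring
    have he₁ : (1 : ℂ) + Complex.I * (t - u) ≠ 0 := by
      intro h
      have := congrArg Complex.re h
      simp [Complex.add_re, Complex.mul_re] at this
    have he₂ : (1 : ℂ) - Complex.I * (t - u) ≠ 0 := by
      intro h
      have := congrArg Complex.re h
      simp [Complex.sub_re, Complex.mul_re] at this
    have hk : (1 : ℂ) + ((t : ℂ) - u) ^ 2 =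
        (1 + Complex.I * (t - u)) * (1 - Complex.I * (t - u)) := by
      ring_nf; rw [Complex.I_sq]; ring
    have hk0 : (1 : ℂ) + ((t : ℂ) - u) ^ 2 ≠ 0 := by
      rw [hk]; exact mul_ne_zero he₁ he₂
    have s₁ : (1 - (↑t * ↑u : ℂ) / d₁)⁻¹ = d₁ / (1 + Complex.I * (t - u)) := by
      rw [← e₁]; field_simp
    have s₂ : (1 - (↑t * ↑u : ℂ) / d₂)⁻¹ = d₂ / (1 - Complex.I * (t - u)) := by
      rw [← e₂]; field_simp
    rw [s₁, s₂, hk]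
    field_simp
    ring
  rw [hval] at htotal
  exact ⟨htotal.summable, htotal.tsum_eq⟩
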